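/- Left-to-right ordering of downward rewrites in ReC_∨ derivations: For every derivation of a clause D from a set of equations 𝒞 in the calculus ReC_∨, there exists a ReC_∨ derivation of D from 𝒞 such that, when every clause is additionally annotated with the position of the previous rewrite performed on it (conclusions of Sup, EqRes and EqFac annotated with the empty position ε), every Rw_↓ inference rewriting at position q in a clause with position annotation p satisfies the left-to-right constraint q ≮_l p, while the Rw_↑ inferences are unconstrained. -/

import Mathlib

namespace RewInd

/-- First-order terms over variables `V` and function symbols `F`. -/
inductive Trm (V F : Type) : Type
  | var : V → Trm V F
  | app : F → List (Trm V F) → Trm V F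

variable {V F : Type}

/-- A substitution maps variables to terms. -/
abbrev Subst (V F : Type) := V → Trm V F

namespace Trm

/-- Apply a substitution homomorphically to a term. -/
def subst (θ : Subst V F) : Trm V F → Trm V F
  | var v => θ v
  | app f ts => app f (ts.attach.map fun t => subst θ t.1)
  decreasing_by
    have := List.sizeOf_lt_of_mem t.2
    simp only [Trm.app.sizeOf_spec]
    omega

/-- A term is ground if it contains no variables. -/
inductive Ground : Trm V F → Prop
  | app {f : F} {ts : List (Trm V F)} : (∀ t ∈ ts, Ground t) → Ground (app f ts)

/-- Whether a term is a variable. -/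
def isVar : Trm V F → Prop
  | var _ => True
  | app _ _ => False

/-- The multiset of variable occurrences of a term. -/
def varsM : Trm V F → Multiset V
  | var v => {v}
  | app _ ts => (ts.attach.map fun t => varsM t.1).sum
  decreasing_by
    have := List.sizeOf_lt_of_mem t.2
    simp only [Trm.app.sizeOf_spec]
    omega

end Trm

/-- Composition of substitutions: apply `θ` first, then `η`. -/
def Subst.comp (θ η : Subst V F) : Subst V F := fun v => (θ v).subst η

/-- The substitution replacing only the variable `x` by the term `t`. -/
def Subst.single [DecidableEq V] (x : V) (t : Trm V F) : Subst V F :=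
  fun v => if v = x then t else Trm.var v

/-- Positions: finite sequences of argument indices addressing subterm occurrences. -/
abbrev Pos := List ℕ

/-- `PosLeft p q` (`p <ₗ q`): position `p` is to the left of position `q`. -/
def PosLeft (p q : Pos) : Prop :=
  ∃ (r : Pos) (i j : ℕ) (p' q' : Pos), i < j ∧ p = r ++ i :: p' ∧ q = r ++ j :: q'

namespace Trm

/-- `SubtermAt t p s`: the term `t` has the subterm `s` at position `p`. -/
inductive SubtermAt : Trm V F → Pos → Trm V F → Prop
  | here (t : Trm V F) : SubtermAt t [] t
  | app {f : F} {ts : List (Trm V F)} {i : ℕ} {t s : Trm V F} {p : Pos} :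
      ts[i]? = some t → SubtermAt t p s → SubtermAt (app f ts) (i :: p) s

/-- `s` is a subterm of `t` (`s ⊴ t`). -/
def Subterm (s t : Trm V F) : Prop := ∃ p, SubtermAt t p s

/-- `s` is a strict subterm of `t` (`s ◁ t`). -/
def StrictSubterm (s t : Trm V F) : Prop := ∃ p, p ≠ [] ∧ SubtermAt t p s

/-- `ReplP a b p s t`: the term `s` has an occurrence of `a` at position `p`, and `t` is
the result of replacing this occurrence by `b`. -/
inductive ReplP (a b : Trm V F) : Pos → Trm V F → Trm V F → Prop
  | here : ReplP a b [] a b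
  | app {f : F} {ts : List (Trm V F)} {i : ℕ} {t t' : Trm V F} {p : Pos} :
      ts[i]? = some t → ReplP a b p t t' →
      ReplP a b (i :: p) (app f ts) (app f (ts.set i t'))

/-- `t` is obtained from `s` by replacing one occurrence of `a` by `b`. -/
def Repl (a b s t : Trm V F) : Prop := ∃ p, ReplP a b p s t

end Trm

/-- Literals: equations `s ≃ t` and disequations `s ≄ t`. -/
inductive Lit (V F : Type) : Type
  | pos : Trm V F → Trm V F → Lit V F
  | neg : Trm V F → Trm V F → Lit V F

namespace Lit

def subst (θ : Subst V F) : Lit V F → Lit V F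
  | pos s t => pos (s.subst θ) (t.subst θ)
  | neg s t => neg (s.subst θ) (t.subst θ)

/-- The complement of a literal. -/
def compl : Lit V F → Lit V F
  | pos s t => neg s t
  | neg s t => pos s t

def Ground : Lit V F → Prop
  | pos s t => s.Ground ∧ t.Ground
  | neg s t => s.Ground ∧ t.Ground

def varsM : Lit V F → Multiset V
  | pos s t => s.varsM + t.varsM
  | neg s t => s.varsM + t.varsM

/-- The literal with polarity `b` (`true` = equation, `false` = disequation) and sides `s`, `t`. -/
def sided (b : Bool) (s t : Trm V F) : Lit V F := if b then pos s t else neg s t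

/-- `L` is the literal `s ⋈ t` of polarity `b`, where (dis)equations are symmetric in their
two sides. -/
def HasShape (L : Lit V F) (b : Bool) (s t : Trm V F) : Prop :=
  L = sided b s t ∨ L = sided b t s

/-- Replacement of one occurrence of `a` by `b` at a position inside a literal:
position `0` addresses the left-hand side, position `1` the right-hand side. -/
inductive ReplP (a b : Trm V F) : Pos → Lit V F → Lit V F → Prop
  | posL {s s' t : Trm V F} {p : Pos} :
      Trm.ReplP a b p s s' → ReplP a b (0 :: p) (pos s t) (pos s' t)
  | posR {s t t' : Trm V F} {p : Pos} :
      Trm.ReplP a b p t t' → ReplP a b (1 :: p) (pos s t) (pos s t')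
  | negL {s s' t : Trm V F} {p : Pos} :
      Trm.ReplP a b p s s' → ReplP a b (0 :: p) (neg s t) (neg s' t)
  | negR {s t t' : Trm V F} {p : Pos} :
      Trm.ReplP a b p t t' → ReplP a b (1 :: p) (neg s t) (neg s t')

def Repl (a b : Trm V F) (L L' : Lit V F) : Prop := ∃ p, ReplP a b p L L'

/-- `SubtermAt L p u`: the literal `L` has the subterm `u` at position `p`. -/
inductive SubtermAt : Lit V F → Pos → Trm V F → Prop
  | posL {s t u : Trm V F} {p : Pos} : Trm.SubtermAt s p u → SubtermAt (pos s t) (0 :: p) u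
  | posR {s t u : Trm V F} {p : Pos} : Trm.SubtermAt t p u → SubtermAt (pos s t) (1 :: p) u
  | negL {s t u : Trm V F} {p : Pos} : Trm.SubtermAt s p u → SubtermAt (neg s t) (0 :: p) u
  | negR {s t u : Trm V F} {p : Pos} : Trm.SubtermAt t p u → SubtermAt (neg s t) (1 :: p) u

end Lit

/-- Clauses are finite multisets of literals. -/
abbrev Clause (V F : Type) := Multiset (Lit V F)

namespace Clause

def subst (θ : Subst V F) (C : Clause V F) : Clause V F := C.map (Lit.subst θ)

def Ground (C : Clause V F) : Prop := ∀ L ∈ C, L.Ground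

def varsM (C : Clause V F) : Multiset V := (C.map Lit.varsM).sum

/-- `ReplP a b q C D`: the clause `D` is obtained from `C` by replacing one occurrence
of `a` at clause position `q` by `b` (the head of `q` addresses a literal of the clause). -/
def ReplP (a b : Trm V F) (q : Pos) (C D : Clause V F) : Prop :=
  ∃ (ls : List (Lit V F)) (i : ℕ) (L L' : Lit V F) (p : Pos),
    q = i :: p ∧ C = (ls : Multiset (Lit V F)) ∧ ls[i]? = some L ∧
    Lit.ReplP a b p L L' ∧ D = ((ls.set i L' : List (Lit V F)) : Multiset (Lit V F))

/-- `D` is obtained from `C` by replacing one occurrence of `a` by `b`. -/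
def Repl (a b : Trm V F) (C D : Clause V F) : Prop := ∃ q, ReplP a b q C D

end Clause

/-- The unit clause `l ≃ r`. -/
def eqn (l r : Trm V F) : Clause V F := {Lit.pos l r}

/-- `E` is the equation `l ≃ r`; equations are symmetric in their sides. -/
def IsEqnOf (E : Clause V F) (l r : Trm V F) : Prop := E = eqn l r ∨ E = eqn r l

/-- `E` is a (unit) equation. -/
def IsEqn (E : Clause V F) : Prop := ∃ l r, E = eqn l r

/-- The (Dershowitz–Manna) multiset extension of an ordering: `N` is greater than `M`. -/
def MulExt {α : Type*} (r : α → α → Prop) (N M : Multiset α) : Prop :=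
  ∃ X Y Z, N = Z + Y ∧ M = Z + X ∧ Y ≠ 0 ∧ ∀ x ∈ X, ∃ y ∈ Y, r y x

/-- Encoding of a literal as a multiset of terms, for the ordering extension. -/
def Lit.ms : Lit V F → Multiset (Trm V F)
  | .pos s t => {s, t}
  | .neg s t => {s, s, t, t}

/-- Extension of the term ordering to literals. -/
def LitGT (succ : Trm V F → Trm V F → Prop) (L M : Lit V F) : Prop := MulExt succ L.ms M.ms

/-- Extension of the term ordering to clauses. -/
def ClauseGT (succ : Trm V F → Trm V F → Prop) (C D : Clause V F) : Prop :=
  MulExt (LitGT succ) C D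

/-- `a ⪰ b`. -/
def SuccEq (succ : Trm V F → Trm V F → Prop) (a b : Trm V F) : Prop := succ a b ∨ a = b

/-- `succ` is a simplification ordering (total on ground terms). -/
structure SimpOrd (succ : Trm V F → Trm V F → Prop) : Prop where
  trans : ∀ {a b c : Trm V F}, succ a b → succ b c → succ a c
  irrefl : ∀ a : Trm V F, ¬ succ a a
  wf : WellFounded fun a b : Trm V F => succ b a
  total_ground : ∀ {s t : Trm V F}, s.Ground → t.Ground → succ s t ∨ s = t ∨ succ t s
  subst_mono : ∀ {l r : Trm V F} (θ : Subst V F), succ l r → succ (l.subst θ) (r.subst θ)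
  ctx_mono : ∀ {l r s s' : Trm V F} {p : Pos}, succ l r → Trm.ReplP l r p s s' → succ s s'

/-- `θ` is a unifier of `s` and `t`. -/
def IsUnifier (θ : Subst V F) (s t : Trm V F) : Prop := s.subst θ = t.subst θ

/-- `θ` is a most general unifier of `s` and `t`. -/
def IsMGU (θ : Subst V F) (s t : Trm V F) : Prop :=
  IsUnifier θ s t ∧ ∀ η, IsUnifier η s t → ∃ μ, ∀ v, η v = (θ v).subst μ

/-- The superposition calculus `Sup` (rules Sup, EqRes, EqFac). -/
inductive SupInf (succ : Trm V F → Trm V F → Prop) : List (Clause V F) → Clause V F → Prop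
  | sup {C D C' D' : Clause V F} {L M : Lit V F} {b : Bool} {s t u l r s' : Trm V F}
      {p : Pos} {θ : Subst V F} :
      C = L ::ₘ C' → L.HasShape b s t →
      D = M ::ₘ D' → M.HasShape true l r →
      ¬ u.isVar → Trm.ReplP u r p s s' → IsMGU θ l u →
      ¬ SuccEq succ (r.subst θ) (l.subst θ) → ¬ SuccEq succ (t.subst θ) (s.subst θ) →
      SupInf succ [C, D] (Clause.subst θ (Lit.sided b s' t ::ₘ (C' + D')))
  | eqres {C C' : Clause V F} {L : Lit V F} {s t : Trm V F} {θ : Subst V F} :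
      C = L ::ₘ C' → L.HasShape false s t → IsMGU θ s t →
      SupInf succ [C] (Clause.subst θ C')
  | eqfac {C C' : Clause V F} {L M : Lit V F} {s t u w : Trm V F} {θ : Subst V F} :
      C = L ::ₘ M ::ₘ C' → L.HasShape true s t → M.HasShape true u w → IsMGU θ s u →
      ¬ SuccEq succ (t.subst θ) (s.subst θ) → ¬ SuccEq succ (w.subst θ) (t.subst θ) →
      SupInf succ [C] (Clause.subst θ (Lit.sided true s t ::ₘ Lit.sided false t w ::ₘ C'))

/-- The unconstrained rewriting rule (Rw): from `C[lθ]` and `l ≃ r` derive `C[lθ ↦ rθ]`. -/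
def RwInf : List (Clause V F) → Clause V F → Prop := fun Ps D =>
  ∃ (C E : Clause V F) (l r : Trm V F) (θ : Subst V F),
    Ps = [C, E] ∧ IsEqnOf E l r ∧ Clause.Repl (l.subst θ) (r.subst θ) C D

/-- Derivability of a clause from a set of clauses in an inference system given as a
relation between lists of premises and conclusions. -/
inductive Derives {α : Type*} (I : List α → α → Prop) (S : Set α) : α → Prop
  | ax {C} : C ∈ S → Derives I S C
  | inf {Ps C} : (∀ P ∈ Ps, Derives I S P) → I Ps C → Derives I S C

/-- An inference system admits equational derivability (ED). -/
def AdmitsED (I : List (Clause V F) → Clause V F → Prop) : Prop :=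
  ∀ S : Set (Clause V F), (∀ C ∈ S, IsEqn C) →
    ∀ (l r : Trm V F) (θ : Subst V F) (D D' : Clause V F),
      Derives I S D → Clause.Repl (l.subst θ) (r.subst θ) D D' →
      Derives I (S ∪ {eqn l r}) D'

/-- Clause annotations `↓` and `↑`. -/
inductive Ann : Type
  | down
  | up

/-- Annotate every clause of a set with `↓`. -/
def annDown (S : Set (Clause V F)) : Set (Clause V F × Ann) :=
  {P | P.1 ∈ S ∧ P.2 = Ann.down}

/-- Lift an inference system to annotated clauses: all premises and the conclusion
are annotated `↓`. -/
def LiftDown (I : List (Clause V F) → Clause V F → Prop) :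
    List (Clause V F × Ann) → (Clause V F × Ann) → Prop := fun Ps C =>
  I (Ps.map Prod.fst) C.1 ∧ (∀ P ∈ Ps, P.2 = Ann.down) ∧ C.2 = Ann.down

/-- The rule Rw_↓: from `↓`-annotated `C[lθ]` and `↓`-annotated `l ≃ r` with `lθ ⋠ rθ`,
derive `↓`-annotated `C[lθ ↦ rθ]`. -/
def RwDownInf (succ : Trm V F → Trm V F → Prop) :
    List (Clause V F × Ann) → (Clause V F × Ann) → Prop := fun Ps D =>
  ∃ (C E : Clause V F) (l r : Trm V F) (θ : Subst V F),
    Ps = [(C, Ann.down), (E, Ann.down)] ∧ IsEqnOf E l r ∧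
    ¬ SuccEq succ (r.subst θ) (l.subst θ) ∧
    Clause.Repl (l.subst θ) (r.subst θ) C D.1 ∧ D.2 = Ann.down

/-- The rule Rw_↑: from `C[lθ]` with either annotation and `↓`-annotated `l ≃ r` with
`lθ ⋡ rθ`, derive `↑`-annotated `C[lθ ↦ rθ]`. -/
def RwUpInf (succ : Trm V F → Trm V F → Prop) :
    List (Clause V F × Ann) → (Clause V F × Ann) → Prop := fun Ps D =>
  ∃ (C E : Clause V F) (a : Ann) (l r : Trm V F) (θ : Subst V F),
    Ps = [(C, a), (E, Ann.down)] ∧ IsEqnOf E l r ∧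
    ¬ SuccEq succ (l.subst θ) (r.subst θ) ∧
    Clause.Repl (l.subst θ) (r.subst θ) C D.1 ∧ D.2 = Ann.up

/-- The calculus ReC_∨ = Sup ∪ {Rw_↓, Rw_↑}. -/
def ReCvee (succ : Trm V F → Trm V F → Prop) :
    List (Clause V F × Ann) → (Clause V F × Ann) → Prop := fun Ps C =>
  LiftDown (SupInf succ) Ps C ∨ RwDownInf succ Ps C ∨ RwUpInf succ Ps C

/-- Annotate every clause of a set with `↓` and the empty position `ε`. -/
def annDownEps (S : Set (Clause V F)) : Set (Clause V F × Ann × Pos) :=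
  {P | P.1 ∈ S ∧ P.2.1 = Ann.down ∧ P.2.2 = ([] : Pos)}

/-- Lift an inference system to (annotation, position)-annotated clauses: premises are
`↓`-annotated, and the conclusion is annotated `↓` with the empty position `ε`. -/
def LiftDownEps (I : List (Clause V F) → Clause V F → Prop) :
    List (Clause V F × Ann × Pos) → (Clause V F × Ann × Pos) → Prop := fun Ps C =>
  I (Ps.map Prod.fst) C.1 ∧ (∀ P ∈ Ps, P.2.1 = Ann.down) ∧
    C.2.1 = Ann.down ∧ C.2.2 = ([] : Pos)

/-- The rule Rw→_↓. -/
def RwArrDownInf (succ : Trm V F → Trm V F → Prop) :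
    List (Clause V F × Ann × Pos) → (Clause V F × Ann × Pos) → Prop := fun Ps D =>
  ∃ (C E : Clause V F) (p pE : Pos) (l r : Trm V F) (θ : Subst V F) (q : Pos),
    Ps = [(C, Ann.down, p), (E, Ann.down, pE)] ∧ IsEqnOf E l r ∧
    ¬ SuccEq succ (r.subst θ) (l.subst θ) ∧ ¬ PosLeft q p ∧
    Clause.ReplP (l.subst θ) (r.subst θ) q C D.1 ∧ D.2.1 = Ann.down ∧ D.2.2 = q

/-- The rule Rw→_↑. -/
def RwArrUpInf (succ : Trm V F → Trm V F → Prop) :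
    List (Clause V F × Ann × Pos) → (Clause V F × Ann × Pos) → Prop := fun Ps D =>
  ∃ (C E : Clause V F) (a : Ann) (p pE : Pos) (l r : Trm V F) (θ : Subst V F) (q : Pos),
    Ps = [(C, a, p), (E, Ann.down, pE)] ∧ IsEqnOf E l r ∧
    ¬ SuccEq succ (l.subst θ) (r.subst θ) ∧ (a = Ann.down ∨ ¬ PosLeft q p) ∧
    Clause.ReplP (l.subst θ) (r.subst θ) q C D.1 ∧ D.2.1 = Ann.up ∧ D.2.2 = q

/-- The calculus ReC→_∨ = Sup ∪ {Rw→_↓, Rw→_↑}. -/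
def ReCarrVee (succ : Trm V F → Trm V F → Prop) :
    List (Clause V F × Ann × Pos) → (Clause V F × Ann × Pos) → Prop := fun Ps C =>
  LiftDownEps (SupInf succ) Ps C ∨ RwArrDownInf succ Ps C ∨ RwArrUpInf succ Ps C

/-- Rw_↑ lifted to position annotations without any left-to-right constraint. -/
def RwUpAnyPosInf (succ : Trm V F → Trm V F → Prop) :
    List (Clause V F × Ann × Pos) → (Clause V F × Ann × Pos) → Prop := fun Ps D =>
  ∃ (C E : Clause V F) (a : Ann) (p pE : Pos) (l r : Trm V F) (θ : Subst V F) (q : Pos),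
    Ps = [(C, a, p), (E, Ann.down, pE)] ∧ IsEqnOf E l r ∧
    ¬ SuccEq succ (l.subst θ) (r.subst θ) ∧
    Clause.ReplP (l.subst θ) (r.subst θ) q C D.1 ∧ D.2.1 = Ann.up ∧ D.2.2 = q

/-- The calculus ReC_∨ with position annotations, where the Rw_↓ inferences satisfy the
left-to-right constraint `q ≮ₗ p` and the Rw_↑ inferences are unconstrained. -/
def ReCveeLtr (succ : Trm V F → Trm V F → Prop) :
    List (Clause V F × Ann × Pos) → (Clause V F × Ann × Pos) → Prop := fun Ps C =>
  LiftDownEps (SupInf succ) Ps C ∨ RwArrDownInf succ Ps C ∨ RwUpAnyPosInf succ Ps C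

/-!
A Rw_↓ step at a position `q` strictly to the left of the position `p` of the preceding
rewrite acts on a subterm occurrence parallel to it, so the two rewrites can be swapped;
each keeps its own instance `lθ ↦ rθ` of its equation and hence its ordering side condition.
Inserting every new Rw_↓ step into the chain of Rw_↓ steps above it by such swaps, as in an
insertion sort, restores the left-to-right constraint; the swaps stop at the `ε`-annotated
clause that starts the chain, where every rewrite position is allowed. Rw_↑ steps are unconstrained and their
conclusions never feed Rw_↓ or Sup steps, so they need no reordering.
-/

theorem not_posLeft_nil {q : Pos} : ¬ PosLeft q [] := by
  rintro ⟨r, i, j, p', q', -, -, hq⟩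
  cases r <;> simp at hq

theorem not_nil_posLeft {q : Pos} : ¬ PosLeft [] q := by
  rintro ⟨r, i, j, p', q', -, hp, -⟩
  cases r <;> simp at hp

theorem posLeft_cons_iff {i j : ℕ} {p q : Pos} :
    PosLeft (i :: p) (j :: q) ↔ i < j ∨ (i = j ∧ PosLeft p q) := by
  constructor
  · rintro ⟨_ | ⟨k, r⟩, i', j', p', q', hij, hp, hq⟩
    · simp only [List.nil_append, List.cons.injEq] at hp hq
      exact Or.inl (hp.1 ▸ hq.1 ▸ hij)
    · simp only [List.cons_append, List.cons.injEq] at hp hq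
      exact Or.inr ⟨hp.1.trans hq.1.symm, r, i', j', p', q', hij, hp.2, hq.2⟩
  · rintro (h | ⟨rfl, r, i', j', p', q', hij, hp, hq⟩)
    · exact ⟨[], i, j, p, q, h, rfl, rfl⟩
    · exact ⟨i :: r, i', j', p', q', hij, by simp [hp], by simp [hq]⟩

@[simp]
theorem posLeft_cons_cons_self {i : ℕ} {p q : Pos} :
    PosLeft (i :: p) (i :: q) ↔ PosLeft p q := by
  simp [posLeft_cons_iff]

theorem PosLeft.asymm {p q : Pos} (hpq : PosLeft p q) : ¬ PosLeft q p := by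
  induction p generalizing q with
  | nil => exact absurd hpq not_nil_posLeft
  | cons i p ih =>
    cases q with
    | nil => exact absurd hpq not_posLeft_nil
    | cons j q =>
      intro hqp
      rcases posLeft_cons_iff.mp hpq with hij | ⟨rfl, htail⟩
      · rcases posLeft_cons_iff.mp hqp with hji | ⟨hji, -⟩ <;> omega
      · exact ih htail (posLeft_cons_cons_self.mp hqp)

theorem Trm.ReplP.comm {a b c d s s' s'' : Trm V F} {p q : Pos}
    (h₁ : Trm.ReplP a b p s s') (h₂ : Trm.ReplP c d q s' s'')
    (hpq : PosLeft p q ∨ PosLeft q p) :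
    ∃ m, Trm.ReplP c d q s m ∧ Trm.ReplP a b p m s'' := by
  induction h₁ generalizing q s'' with
  | here => simp [not_posLeft_nil, not_nil_posLeft] at hpq
  | @app f ts j t t' p hget h₁ ih =>
    cases h₂ with
    | here => simp [not_posLeft_nil, not_nil_posLeft] at hpq
    | @app _ _ i u u' q hget₂ h₂ =>
      have hj : j < ts.length := (List.getElem?_eq_some_iff.mp hget).1
      by_cases hij : i = j
      · subst hij
        rw [List.getElem?_set_self hj] at hget₂
        cases hget₂
        obtain ⟨m, hm₁, hm₂⟩ := ih h₂ (by simpa using hpq)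
        refine ⟨Trm.app f (ts.set i m), .app hget hm₁, ?_⟩
        rw [List.set_set]
        simpa using Trm.ReplP.app (ts := ts.set i m) (List.getElem?_set_self hj) hm₂
      · rw [List.getElem?_set_ne (Ne.symm hij)] at hget₂
        refine ⟨Trm.app f (ts.set i u'), .app hget₂ h₂, ?_⟩
        rw [List.set_comm _ _ (Ne.symm hij)]
        exact .app (by rwa [List.getElem?_set_ne hij]) h₁

theorem Lit.ReplP.comm {a b c d : Trm V F} {p q : Pos} {L L' L'' : Lit V F}
    (h₁ : Lit.ReplP a b p L L') (h₂ : Lit.ReplP c d q L' L'')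
    (hpq : PosLeft p q ∨ PosLeft q p) :
    ∃ M, Lit.ReplP c d q L M ∧ Lit.ReplP a b p M L'' := by
  cases h₁ with
  | posL h₁ =>
    cases h₂ with
    | posL h₂ =>
      obtain ⟨m, hm₁, hm₂⟩ := h₁.comm h₂ (by simpa using hpq)
      exact ⟨_, .posL hm₁, .posL hm₂⟩
    | posR h₂ => exact ⟨_, .posR h₂, .posL h₁⟩
  | posR h₁ =>
    cases h₂ with
    | posL h₂ => exact ⟨_, .posL h₂, .posR h₁⟩
    | posR h₂ =>
      obtain ⟨m, hm₁, hm₂⟩ := h₁.comm h₂ (by simpa using hpq)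
      exact ⟨_, .posR hm₁, .posR hm₂⟩
  | negL h₁ =>
    cases h₂ with
    | negL h₂ =>
      obtain ⟨m, hm₁, hm₂⟩ := h₁.comm h₂ (by simpa using hpq)
      exact ⟨_, .negL hm₁, .negL hm₂⟩
    | negR h₂ => exact ⟨_, .negR h₂, .negL h₁⟩
  | negR h₁ =>
    cases h₂ with
    | negL h₂ => exact ⟨_, .negL h₂, .negR h₁⟩
    | negR h₂ =>
      obtain ⟨m, hm₁, hm₂⟩ := h₁.comm h₂ (by simpa using hpq)
      exact ⟨_, .negR hm₁, .negR hm₂⟩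

theorem Clause.ReplP.exists_cons_eq {a b : Trm V F} {q : Pos} {C D : Clause V F}
    (h : Clause.ReplP a b q C D) :
    ∃ (p : Pos) (L L' : Lit V F) (R : Clause V F),
      C = L ::ₘ R ∧ D = L' ::ₘ R ∧ Lit.ReplP a b p L L' := by
  obtain ⟨ls, i, L, L', p, -, rfl, hget, hL, rfl⟩ := h
  obtain ⟨hi, rfl⟩ := List.getElem?_eq_some_iff.mp hget
  refine ⟨p, _, L', ls.eraseIdx i, ?_, ?_, hL⟩
  · exact Multiset.coe_eq_coe.mpr (List.getElem_cons_eraseIdx_perm hi).symm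
  · exact Multiset.coe_eq_coe.mpr (List.set_perm_cons_eraseIdx hi L')

theorem Clause.replP_cons {a b : Trm V F} {p : Pos} {L L' : Lit V F} (R : Clause V F)
    (h : Lit.ReplP a b p L L') : Clause.ReplP a b (0 :: p) (L ::ₘ R) (L' ::ₘ R) :=
  by
  refine ⟨L :: R.toList, 0, L, L', p, rfl, ?_, rfl, h, ?_⟩ <;>
    simp only [List.set_cons_zero, ← Multiset.cons_coe, Multiset.coe_toList]

section LeftToRight

variable (succ : Trm V F → Trm V F → Prop) (𝒞 : Set (Clause V F))

def DownRewrite (a b : Trm V F) : Prop :=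
  ∃ (E : Clause V F) (pE : Pos) (l r : Trm V F) (θ : Subst V F),
    Derives (ReCveeLtr succ) (annDownEps 𝒞) (E, Ann.down, pE) ∧ IsEqnOf E l r ∧
    ¬ SuccEq succ (r.subst θ) (l.subst θ) ∧ a = l.subst θ ∧ b = r.subst θ

/-- Chains of left-to-right ordered Rw_↓ steps below an `ε`-annotated clause. Each step
rewrites the head literal of the clause, written as `L ::ₘ R`, so that every rewrite
position has head `0` and consecutive positions are compared inside a single literal. -/
inductive DownChain : Clause V F → Pos → Prop
  | start {C : Clause V F} :
      Derives (ReCveeLtr succ) (annDownEps 𝒞) (C, Ann.down, []) → DownChain C []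
  | rewrite {L L' : Lit V F} {R : Clause V F} {p q : Pos} {a b : Trm V F} :
      DownChain (L ::ₘ R) p → DownRewrite succ 𝒞 a b → Lit.ReplP a b q L L' →
      ¬ PosLeft (0 :: q) p → DownChain (L' ::ₘ R) (0 :: q)

variable {succ 𝒞}

theorem DownChain.derives {C : Clause V F} {p : Pos} (h : DownChain succ 𝒞 C p) :
    Derives (ReCveeLtr succ) (annDownEps 𝒞) (C, Ann.down, p) := by
  induction h with
  | start h => exact h
  | @rewrite L L' R p q _ _ _ hab hL hnl ih =>
    obtain ⟨E, pE, l, r, θ, hE, hEq, hord, rfl, rfl⟩ := hab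
    refine Derives.inf (Ps := [(L ::ₘ R, Ann.down, p), (E, Ann.down, pE)])
      (by simpa using ⟨ih, hE⟩) (Or.inr (Or.inl ?_))
    exact ⟨_, E, p, pE, l, r, θ, 0 :: q, rfl, hEq, hord, hnl, Clause.replP_cons R hL, rfl, rfl⟩

theorem DownChain.extend {C : Clause V F} {p : Pos} (h : DownChain succ 𝒞 C p) :
    ∀ {a b : Trm V F} {L L' : Lit V F} {R : Clause V F} {q : Pos},
      DownRewrite succ 𝒞 a b → C = L ::ₘ R → Lit.ReplP a b q L L' →
      ∃ p', DownChain succ 𝒞 (L' ::ₘ R) p' ∧ (p' = 0 :: q ∨ p' = p) := by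
  induction h with
  | start hC =>
    rintro a b L L' R q hab rfl hL
    exact ⟨_, .rewrite (.start hC) hab hL not_posLeft_nil, Or.inl rfl⟩
  | @rewrite L₁ L₁' R₁ p₀ q₁ a₁ b₁ h₀ hab₁ hL₁ hnl₁ ih =>
    intro a b L L' R q hab hC hL
    by_cases hlt : PosLeft q q₁
    case neg =>
      have h₁ : DownChain succ 𝒞 (L ::ₘ R) (0 :: q₁) :=
        hC ▸ .rewrite h₀ hab₁ hL₁ hnl₁
      exact ⟨_, .rewrite h₁ hab hL (by simpa using hlt), Or.inl rfl⟩
    have hcompat : ∀ p', (p' = 0 :: q ∨ p' = p₀) → ¬ PosLeft (0 :: q₁) p' := by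
      rintro p' (rfl | rfl)
      · simpa using hlt.asymm
      · exact hnl₁
    rcases Multiset.cons_eq_cons.mp hC with ⟨rfl, rfl⟩ | ⟨-, cs, rfl, rfl⟩
    · obtain ⟨M, hM₁, hM₂⟩ := hL₁.comm hL (Or.inr hlt)
      obtain ⟨p', h', hp'⟩ := ih hab rfl hM₁
      exact ⟨_, .rewrite h' hab₁ hM₂ (hcompat p' hp'), Or.inr rfl⟩
    · obtain ⟨p', h', hp'⟩ := ih hab (Multiset.cons_swap _ _ _) hL
      rw [Multiset.cons_swap] at h' ⊢
      exact ⟨_, .rewrite h' hab₁ hL₁ (hcompat p' hp'), Or.inr rfl⟩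

theorem exists_derives_reCveeLtr {P : Clause V F × Ann}
    (h : Derives (ReCvee succ) (annDown 𝒞) P) :
    ∃ p, Derives (ReCveeLtr succ) (annDownEps 𝒞) (P.1, P.2, p) ∧
      (P.2 = Ann.down → DownChain succ 𝒞 P.1 p) := by
  induction h with
  | ax hP =>
    have hd : Derives (ReCveeLtr succ) (annDownEps 𝒞) (_, Ann.down, []) :=
      .ax ⟨hP.1, rfl, rfl⟩
    exact ⟨[], hP.2 ▸ hd, fun _ => .start hd⟩
  | @inf Ps P _ hI ih =>
    rcases hI with ⟨hsup, hdown, hP⟩ | ⟨C, E, l, r, θ, rfl, hEq, hord, ⟨q, hq⟩, hP⟩ |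
      ⟨C, E, a, l, r, θ, rfl, hEq, hord, ⟨q, hq⟩, hP⟩
    · choose! f hf using ih
      have hd : Derives (ReCveeLtr succ) (annDownEps 𝒞) (P.1, Ann.down, []) := by
        refine .inf (Ps := Ps.map fun Q => (Q.1, Q.2, f Q))
          (List.forall_mem_map.mpr fun Q hQ => (hf Q hQ).1)
          (Or.inl ⟨?_, List.forall_mem_map.mpr hdown, rfl, rfl⟩)
        simpa [Function.comp_def] using hsup
      exact ⟨[], hP ▸ hd, fun _ => .start hd⟩
    · obtain ⟨pC, -, hC⟩ := ih (C, Ann.down) (by simp)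
      obtain ⟨pE, hE, -⟩ := ih (E, Ann.down) (by simp)
      obtain ⟨pl, L, L', R, hCLR, hPLR, hL⟩ := hq.exists_cons_eq
      obtain ⟨p, hchain, -⟩ :=
        (hC rfl).extend ⟨E, pE, l, r, θ, hE, hEq, hord, rfl, rfl⟩ hCLR hL
      rw [hP, hPLR]
      exact ⟨p, hchain.derives, fun _ => hchain⟩
    · obtain ⟨pC, hC, -⟩ := ih (C, a) (by simp)
      obtain ⟨pE, hE, -⟩ := ih (E, Ann.down) (by simp)
      refine ⟨q, .inf (Ps := [(C, a, pC), (E, Ann.down, pE)]) (by simpa using ⟨hC, hE⟩)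
        (Or.inr (Or.inr ⟨C, E, a, pC, pE, l, r, θ, q, rfl, hEq, hord, hq, hP, rfl⟩)), ?_⟩
      simp [hP]

end LeftToRight

theorem left_to_right_downward_rewrites_general {V F : Type}
    (succ : Trm V F → Trm V F → Prop)
    (𝒞 : Set (Clause V F))
    (D : Clause V F) (a : Ann)
    (hder : Derives (ReCvee succ) (annDown 𝒞) (D, a)) :
    ∃ (a' : Ann) (q : Pos),
      Derives (ReCveeLtr succ) (annDownEps 𝒞) (D, a', q) := by
  obtain ⟨q, hq, -⟩ := exists_derives_reCveeLtr hder
  exact ⟨a, q, hq⟩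

/-- **Left-to-right ordering of downward rewrites in ReC_∨ derivations.**
For every derivation of a clause `D` from a set of equations `𝒞` in ReC_∨, there is a
ReC_∨ derivation of `D` from `𝒞` in which, annotating every clause with the position of
the previous rewrite performed on it (conclusions of Sup, EqRes and EqFac annotated
`ε`), every Rw_↓ inference rewriting at position `q` in a clause with position
annotation `p` satisfies `q ≮ₗ p`, while the Rw_↑ inferences are unconstrained. -/
theorem left_to_right_downward_rewrites {V F : Type}
    (succ : Trm V F → Trm V F → Prop) (hsucc : SimpOrd succ)
    (𝒞 : Set (Clause V F)) (h𝒞 : ∀ C ∈ 𝒞, IsEqn C)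
    (D : Clause V F) (a : Ann)
    (hder : Derives (ReCvee succ) (annDown 𝒞) (D, a)) :
    ∃ (a' : Ann) (q : Pos),
      Derives (ReCveeLtr succ) (annDownEps 𝒞) (D, a', q) :=
  left_to_right_downward_rewrites_general succ 𝒞 D a hder

end RewInd
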